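/- Let D0 and D1 be probability mass functions on a countable set X. Then JSD(D0 ‖ D1) ≥ (1/4) · ∑_x (D1(x) − D0(x))² / (D0(x) + D1(x)), where the sum ranges over all x with D0(x) + D1(x) > 0. -/

import Mathlib

/-!
Write `a = D0 x`, `b = D1 x`, `m = (a + b) / 2` and `t = (b - a) / (a + b) ∈ [-1, 1]`. The `x`-th
summand of the JSD is
`(m / 2) * ((1 + t) log (1 + t) + (1 - t) log (1 - t))` and that of the right-hand side is
`(m / 2) * t²`, so the inequality holds termwise once `t² ≤ (1 + t) log (1 + t) + (1 - t) log (1 - t)`.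
Both sides vanish at `t = 0` and the derivative of the difference is `log (1 + t) - log (1 - t) - 2t`,
which is nonnegative for `t ≥ 0` because `log (1 + t) - log (1 - t)` is the series
`2 (t + t³/3 + t⁵/5 + ⋯)`. All series involved are dominated by `D0 + D1`, so summing is legitimate.
-/

open Real

namespace Real

theorem two_mul_le_log_one_add_sub_log_one_sub {t : ℝ} (h₀ : 0 ≤ t) (h₁ : t < 1) :
    2 * t ≤ log (1 + t) - log (1 - t) := by
  have hs := hasSum_log_sub_log_of_abs_lt_one (abs_lt.2 ⟨by linarith, h₁⟩)
  simpa using le_hasSum hs 0 fun k _ => by positivity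

theorem sq_le_mul_log_one_add_add_mul_log_one_sub_of_nonneg {t : ℝ} (h₀ : 0 ≤ t) (h₁ : t ≤ 1) :
    t ^ 2 ≤ (1 + t) * log (1 + t) + (1 - t) * log (1 - t) := by
  set H : ℝ → ℝ := fun s => (1 + s) * log (1 + s) + (1 - s) * log (1 - s) - s ^ 2
  have hcont : ContinuousOn H (Set.Icc 0 1) := by
    have := continuous_mul_log
    fun_prop
  have hderiv : ∀ s ∈ interior (Set.Icc (0 : ℝ) 1),
      HasDerivWithinAt H (log (1 + s) - log (1 - s) - 2 * s) (interior (Set.Icc 0 1)) s := by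
    rw [interior_Icc]
    rintro s ⟨hs₀, hs₁⟩
    have hp := (hasDerivAt_mul_log (x := 1 + s) (by linarith)).comp s
      ((hasDerivAt_id s).const_add 1)
    have hm := (hasDerivAt_mul_log (x := 1 - s) (by linarith)).comp s
      ((hasDerivAt_id s).const_sub 1)
    exact (((hp.add hm).sub (hasDerivAt_pow 2 s)).congr_deriv (by ring)).hasDerivWithinAt
  have hmono : MonotoneOn H (Set.Icc 0 1) := by
    refine monotoneOn_of_hasDerivWithinAt_nonneg (convex_Icc 0 1) hcont hderiv ?_
    rw [interior_Icc]
    rintro s ⟨hs₀, hs₁⟩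
    linarith [two_mul_le_log_one_add_sub_log_one_sub hs₀.le hs₁]
  have := hmono ⟨le_rfl, zero_le_one⟩ ⟨h₀, h₁⟩ h₀
  norm_num [H] at this
  linarith

theorem sq_le_mul_log_one_add_add_mul_log_one_sub {t : ℝ} (ht : |t| ≤ 1) :
    t ^ 2 ≤ (1 + t) * log (1 + t) + (1 - t) * log (1 - t) := by
  rcases le_total 0 t with h | h
  · exact sq_le_mul_log_one_add_add_mul_log_one_sub_of_nonneg h (abs_le.1 ht).2
  · have := sq_le_mul_log_one_add_add_mul_log_one_sub_of_nonneg (neg_nonneg.2 h)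
      (neg_le.1 (abs_le.1 ht).1)
    simp only [neg_sq, ← sub_eq_add_neg, sub_neg_eq_add] at this
    linarith

end Real

theorem quarter_mul_sq_sub_div_add_le {a b : ℝ} (ha : 0 ≤ a) (hb : 0 ≤ b) :
    1 / 4 * ((b - a) ^ 2 / (a + b)) ≤
      1 / 2 * (a * log (a / ((a + b) / 2))) + 1 / 2 * (b * log (b / ((a + b) / 2))) := by
  rcases (add_nonneg ha hb).eq_or_lt with hab | hab
  · obtain rfl : a = 0 := by linarith
    obtain rfl : b = 0 := by linarith
    simp
  set t := (b - a) / (a + b)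
  have ht : |t| ≤ 1 := by
    rw [abs_div, abs_of_pos hab, div_le_one hab, abs_le]
    constructor <;> linarith
  have hta : t * (a + b) = b - a := div_mul_cancel₀ _ hab.ne'
  have ha_div : a / ((a + b) / 2) = 1 - t := by field_simp; linarith
  have hb_div : b / ((a + b) / 2) = 1 + t := by field_simp; linarith
  rw [ha_div, hb_div]
  calc 1 / 4 * ((b - a) ^ 2 / (a + b)) = (a + b) / 4 * t ^ 2 := by
        rw [← hta]; field_simp
    _ ≤ (a + b) / 4 * ((1 + t) * log (1 + t) + (1 - t) * log (1 - t)) := by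
        gcongr; exact sq_le_mul_log_one_add_add_mul_log_one_sub ht
    _ = 1 / 2 * (a * log (1 - t)) + 1 / 2 * (b * log (1 + t)) := by
        linear_combination (log (1 + t) - log (1 - t)) / 4 * hta

theorem abs_mul_log_div_midpoint_le {a b : ℝ} (ha : 0 ≤ a) (hb : 0 ≤ b) :
    |a * log (a / ((a + b) / 2))| ≤ a + b := by
  rcases ha.eq_or_lt with rfl | ha
  · simpa using hb
  set m := (a + b) / 2 with hm_def
  have hm : 0 < m := by positivity
  have hupper : a * log (a / m) ≤ a := by
    have hlog : log (a / m) ≤ log 2 :=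
      log_le_log (by positivity) (by rw [div_le_iff₀ hm]; linarith [hm_def])
    nlinarith [log_two_lt_d9]
  have hlower : a - m ≤ a * log (a / m) :=
    calc a - m = m * (a / m - 1) := by field_simp
      _ ≤ m * (a / m * log (a / m)) := by gcongr; exact self_sub_one_le_mul_log (by positivity)
      _ = a * log (a / m) := by field_simp
  rw [abs_le]
  constructor <;> linarith [hm_def]

theorem sq_sub_div_add_le_add {a b : ℝ} (ha : 0 ≤ a) (hb : 0 ≤ b) :
    (b - a) ^ 2 / (a + b) ≤ a + b :=
  div_le_of_le_mul₀ (add_nonneg ha hb) (add_nonneg ha hb) (by nlinarith)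

section Summability

variable {ι : Type*} {p q : ι → ℝ}

theorem summable_mul_log_div_midpoint (hp : ∀ i, 0 ≤ p i) (hq : ∀ i, 0 ≤ q i)
    (hps : Summable p) (hqs : Summable q) :
    Summable fun i => p i * log (p i / ((p i + q i) / 2)) :=
  Summable.of_norm_bounded (hps.add hqs) fun i => abs_mul_log_div_midpoint_le (hp i) (hq i)

theorem summable_sq_sub_div_add (hp : ∀ i, 0 ≤ p i) (hq : ∀ i, 0 ≤ q i)
    (hps : Summable p) (hqs : Summable q) : Summable fun i => (q i - p i) ^ 2 / (p i + q i) :=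
  Summable.of_nonneg_of_le (fun i => div_nonneg (sq_nonneg _) (add_nonneg (hp i) (hq i)))
    (fun i => sq_sub_div_add_le_add (hp i) (hq i)) (hps.add hqs)

end Summability

theorem jsd_ge_quarter_chi_like_sum_general {X : Type*}
    (D0 D1 : X → ℝ)
    (h0nn : ∀ x, 0 ≤ D0 x) (h1nn : ∀ x, 0 ≤ D1 x)
    (h0sum : HasSum D0 1) (h1sum : HasSum D1 1) :
    (1/2) * ∑' x, D0 x * Real.log (D0 x / ((D0 x + D1 x) / 2))
      + (1/2) * ∑' x, D1 x * Real.log (D1 x / ((D0 x + D1 x) / 2))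
      ≥ (1/4) * ∑' x, (D1 x - D0 x) ^ 2 / (D0 x + D1 x) := by
  have hs0 := h0sum.summable
  have hs1 := h1sum.summable
  have hkl0 := summable_mul_log_div_midpoint h0nn h1nn hs0 hs1
  have hkl1 : Summable fun x => D1 x * log (D1 x / ((D0 x + D1 x) / 2)) := by
    simpa only [add_comm (D1 _)] using summable_mul_log_div_midpoint h1nn h0nn hs1 hs0
  rw [ge_iff_le, ← tsum_mul_left, ← tsum_mul_left, ← tsum_mul_left,
    ← (hkl0.mul_left _).tsum_add (hkl1.mul_left _)]
  exact Summable.tsum_le_tsum (fun x => quarter_mul_sq_sub_div_add_le (h0nn x) (h1nn x))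
    ((summable_sq_sub_div_add h0nn h1nn hs0 hs1).mul_left _)
    ((hkl0.mul_left _).add (hkl1.mul_left _))

/-- For probability mass functions `D0`, `D1` on a countable set `X`,
`JSD(D0 ‖ D1) ≥ (1/4) · ∑_x (D1(x) − D0(x))² / (D0(x) + D1(x))`
(terms with `D0 x + D1 x = 0` contribute `0`, as both numerator and denominator vanish). -/
theorem jsd_ge_quarter_chi_like_sum {X : Type*} [Countable X]
    (D0 D1 : X → ℝ)
    (h0nn : ∀ x, 0 ≤ D0 x) (h1nn : ∀ x, 0 ≤ D1 x)
    (h0sum : HasSum D0 1) (h1sum : HasSum D1 1) :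
    (1/2) * ∑' x, D0 x * Real.log (D0 x / ((D0 x + D1 x) / 2))
      + (1/2) * ∑' x, D1 x * Real.log (D1 x / ((D0 x + D1 x) / 2))
      ≥ (1/4) * ∑' x, (D1 x - D0 x) ^ 2 / (D0 x + D1 x) :=
  jsd_ge_quarter_chi_like_sum_general D0 D1 h0nn h1nn h0sum h1sum
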